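/- arXiv:2312.09858 — 2 statements merged into one kernel-verified Lean document; each statement's English description precedes it below -/
import Mathlib

section
/- Let Φ: ℝ^p ⇉ ℝ^q be a polyhedral sublinear set-valued mapping whose domain dom(Φ) is a linear subspace of ℝ^p. Then the Hoffman constant of Φ equals its norm: H(Φ) = ‖Φ‖. -/
open Matrix Set

noncomputable section

/-- A norm on `Fin n → ℝ`, given as a function with the norm axioms. -/
structure IsNorm {n : ℕ} (ν : (Fin n → ℝ) → ℝ) : Prop where
  nonneg : ∀ x, 0 ≤ ν x
  eq_zero_iff : ∀ x, ν x = 0 ↔ x = 0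
  smul : ∀ (a : ℝ) (x : Fin n → ℝ), ν (a • x) = |a| * ν x
  triangle : ∀ x y, ν (x + y) ≤ ν x + ν y

/-- The dual norm of `ν`, with respect to the standard dot-product pairing. -/
def dualNorm {n : ℕ} (ν : (Fin n → ℝ) → ℝ) (z : Fin n → ℝ) : ℝ :=
  sSup {r | ∃ x, ν x ≤ 1 ∧ r = z ⬝ᵥ x}

/-- Point-to-set distance induced by the norm `ν`. -/
def distWith {n : ℕ} (ν : (Fin n → ℝ) → ℝ) (x : Fin n → ℝ) (S : Set (Fin n → ℝ)) : ℝ :=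
  sInf ((fun s => ν (x - s)) '' S)

/-- The graph of a set-valued mapping. -/
def graphOf {p q : ℕ} (Φ : (Fin p → ℝ) → Set (Fin q → ℝ)) :
    Set ((Fin p → ℝ) × (Fin q → ℝ)) := {z | z.2 ∈ Φ z.1}

/-- The domain of a set-valued mapping. -/
def domOf {p q : ℕ} (Φ : (Fin p → ℝ) → Set (Fin q → ℝ)) : Set (Fin p → ℝ) :=
  {u | (Φ u).Nonempty}

/-- The image of a set-valued mapping. -/
def imOf {p q : ℕ} (Φ : (Fin p → ℝ) → Set (Fin q → ℝ)) : Set (Fin q → ℝ) :=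
  ⋃ u, Φ u

/-- The inverse of a set-valued mapping. -/
def invOf {p q : ℕ} (Φ : (Fin p → ℝ) → Set (Fin q → ℝ)) : (Fin q → ℝ) → Set (Fin p → ℝ) :=
  fun v => {u | v ∈ Φ u}

/-- A polyhedron: an intersection of finitely many closed half-spaces. -/
def IsPolyhedron {E : Type*} [AddCommGroup E] [Module ℝ E] (S : Set E) : Prop :=
  ∃ (k : ℕ) (f : Fin k → E →ₗ[ℝ] ℝ) (c : Fin k → ℝ), S = {x | ∀ i, f i x ≤ c i}

/-- A set-valued mapping is polyhedral if its graph is a polyhedron. -/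
def IsPolyhedralMapping {p q : ℕ} (Φ : (Fin p → ℝ) → Set (Fin q → ℝ)) : Prop :=
  IsPolyhedron (graphOf Φ)

/-- A set-valued mapping is sublinear if its graph is a convex cone containing the origin. -/
def IsSublinearMapping {p q : ℕ} (Φ : (Fin p → ℝ) → Set (Fin q → ℝ)) : Prop :=
  (0 : Fin q → ℝ) ∈ Φ 0 ∧ Convex ℝ (graphOf Φ) ∧
    ∀ (t : ℝ), 0 ≤ t → ∀ z ∈ graphOf Φ, t • z ∈ graphOf Φ

/-- The Hoffman constant of a set-valued mapping, with respect to the norms `νp, νq`. -/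
def hoffmanConst {p q : ℕ} (νp : (Fin p → ℝ) → ℝ) (νq : (Fin q → ℝ) → ℝ)
    (Φ : (Fin p → ℝ) → Set (Fin q → ℝ)) : ℝ :=
  sSup {r | ∃ u v, u ∈ domOf Φ ∧ v ∈ imOf Φ ∧ v ∉ Φ u ∧
    r = distWith νq v (Φ u) / distWith νp u (invOf Φ v)}

/-- The norm of a sublinear set-valued mapping, with respect to the norms `νp, νq`. -/
def svmNorm {p q : ℕ} (νp : (Fin p → ℝ) → ℝ) (νq : (Fin q → ℝ) → ℝ)
    (Φ : (Fin p → ℝ) → Set (Fin q → ℝ)) : ℝ :=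
  sSup {r | ∃ u, u ∈ domOf Φ ∧ νp u ≤ 1 ∧ r = sInf (νq '' Φ u)}

/-- The tangent cone to a set `G` at a point `g ∈ G`. -/
def polyTangentCone {E : Type*} [AddCommGroup E] [Module ℝ E] (G : Set E) (g : E) : Set E :=
  {d | ∃ t : ℝ, 0 < t ∧ g + t • d ∈ G}

/-- The collection of tangent cones to the graph of `Φ`. -/
def tangentCones {p q : ℕ} (Φ : (Fin p → ℝ) → Set (Fin q → ℝ)) :
    Set (Set ((Fin p → ℝ) × (Fin q → ℝ))) :=
  {T | ∃ u v, v ∈ Φ u ∧ T = polyTangentCone (graphOf Φ) (u, v)}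

/-- The set-valued mapping whose graph is `T`. -/
def mapOfGraph {p q : ℕ} (T : Set ((Fin p → ℝ) × (Fin q → ℝ))) :
    (Fin p → ℝ) → Set (Fin q → ℝ) := fun w => {z | (w, z) ∈ T}

/-- A subset is a linear subspace if it is the underlying set of a submodule. -/
def IsLinearSubspace {E : Type*} [AddCommGroup E] [Module ℝ E] (S : Set E) : Prop :=
  ∃ W : Submodule ℝ E, S = ↑W

/-- The upper adjoint of a sublinear mapping. -/
def upperAdjoint {p q : ℕ} (Φ : (Fin p → ℝ) → Set (Fin q → ℝ)) :
    (Fin q → ℝ) → Set (Fin p → ℝ) :=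
  fun w => {z | ∀ u v, v ∈ Φ u → z ⬝ᵥ u ≤ w ⬝ᵥ v}

/-- The solution mapping `b ↦ {x ∈ R : Ax - b ∈ S}`. -/
def solMap {m n : ℕ} (A : Matrix (Fin m) (Fin n) ℝ) (R : Set (Fin n → ℝ))
    (S : Set (Fin m → ℝ)) : (Fin m → ℝ) → Set (Fin n → ℝ) :=
  fun b => {x | x ∈ R ∧ A *ᵥ x - b ∈ S}

/-- The dual cone `{z : ⟨z,x⟩ ≥ 0 for all x ∈ C}`. -/
def dualConeOf {n : ℕ} (C : Set (Fin n → ℝ)) : Set (Fin n → ℝ) :=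
  {z | ∀ x ∈ C, 0 ≤ z ⬝ᵥ x}

/-- A polyhedral cone. -/
def IsPolyhedralCone {n : ℕ} (C : Set (Fin n → ℝ)) : Prop :=
  IsPolyhedron C ∧ (0 : Fin n → ℝ) ∈ C ∧ ∀ (t : ℝ), 0 ≤ t → ∀ x ∈ C, t • x ∈ C

/-- The dual solution mapping `c ↦ {y ∈ S* : c - Aᵀy ∈ R*}`. -/
def dualSolMap {m n : ℕ} (A : Matrix (Fin m) (Fin n) ℝ) (R : Set (Fin n → ℝ))
    (S : Set (Fin m → ℝ)) : (Fin n → ℝ) → Set (Fin m → ℝ) :=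
  fun c => {y | y ∈ dualConeOf S ∧ c - Aᵀ *ᵥ y ∈ dualConeOf R}

/-- The box `{x : ℓ ≤ x ≤ u}`. -/
def boxSet {n : ℕ} (ℓ u : Fin n → ℝ) : Set (Fin n → ℝ) :=
  {x | ∀ i, ℓ i ≤ x i ∧ x i ≤ u i}

/-- The nonnegative orthant of `ℝ^n`. -/
def nonnegOrthant (n : ℕ) : Set (Fin n → ℝ) := {x | ∀ i, 0 ≤ x i}

/-- The Euclidean norm on `Fin n → ℝ`. -/
def euclNorm {n : ℕ} (x : Fin n → ℝ) : ℝ := Real.sqrt (∑ i, x i ^ 2)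

/-- The operator norm induced by the Euclidean norms. -/
def opNorm2 {m n : ℕ} (M : Matrix (Fin m) (Fin n) ℝ) : ℝ :=
  sSup {r | ∃ x, euclNorm x ≤ 1 ∧ r = euclNorm (M *ᵥ x)}

/-- The chi condition measure `χ(A) = sup_{D} ‖(ADAᵀ)⁻¹AD‖₂`. -/
def chiMeasure {m n : ℕ} (A : Matrix (Fin m) (Fin n) ℝ) : ℝ :=
  sSup {r | ∃ d : Fin n → ℝ, (∀ i, 0 < d i) ∧
    r = opNorm2 ((A * Matrix.diagonal d * Aᵀ)⁻¹ * (A * Matrix.diagonal d))}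

/-- The chi-bar condition measure `χ̄(A) = sup_{D} ‖Aᵀ(ADAᵀ)⁻¹AD‖₂`. -/
def chiBarMeasure {m n : ℕ} (A : Matrix (Fin m) (Fin n) ℝ) : ℝ :=
  sSup {r | ∃ d : Fin n → ℝ, (∀ i, 0 < d i) ∧
    r = opNorm2 (Aᵀ * (A * Matrix.diagonal d * Aᵀ)⁻¹ * (A * Matrix.diagonal d))}

/-- The orthogonal complement (w.r.t. the dot product) of a set. -/
def perpOf {m : ℕ} (L : Set (Fin m → ℝ)) : Set (Fin m → ℝ) :=
  {y | ∀ s ∈ L, y ⬝ᵥ s = 0}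

/-- The mapping `P_A : b ↦ {x ≥ 0 : Ax = b}`. -/
def PA {m n : ℕ} (A : Matrix (Fin m) (Fin n) ℝ) : (Fin m → ℝ) → Set (Fin n → ℝ) :=
  fun b => {x | (∀ i, 0 ≤ x i) ∧ A *ᵥ x = b}

/-- The mapping `P_A* : c ↦ {y : Aᵀy ≤ c}`. -/
def PAstar {m n : ℕ} (A : Matrix (Fin m) (Fin n) ℝ) : (Fin n → ℝ) → Set (Fin m → ℝ) :=
  fun c => {y | ∀ i, (Aᵀ *ᵥ y) i ≤ c i}

/-- Signature vectors: entries equal to `1` or `-1`. -/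
def IsSignVector {n : ℕ} (d : Fin n → ℝ) : Prop := ∀ i, d i = 1 ∨ d i = -1

end


/-!
For `v ∈ Φ ub` and `u ∈ dom Φ`, sublinearity gives `v + Φ (u - ub) ⊆ Φ u`, and `u - ub ∈ dom Φ`
because the domain is a subspace; hence `dist(v, Φ u) ≤ inf ‖Φ (u - ub)‖ ≤ ‖Φ‖ ‖u - ub‖`, and
minimising over `ub ∈ Φ⁻¹ v` gives `H(Φ) ≤ ‖Φ‖`. Conversely, for `‖u‖ ≤ 1` the pair `(u, 0)` has
ratio `inf ‖Φ u‖ / dist(u, Φ⁻¹ 0) ≥ inf ‖Φ u‖`, the denominator being at most `‖u‖` and positive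
since `Φ⁻¹ 0` is closed. That `‖Φ‖` is finite follows by writing `u` in a basis `b` of `dom Φ`
and summing fixed elements of `Φ (± b j)`.
-/

namespace IsNorm

variable {n : ℕ} {ν : (Fin n → ℝ) → ℝ}

lemma map_zero (h : IsNorm ν) : ν 0 = 0 :=
  (h.eq_zero_iff 0).2 rfl

lemma map_neg (h : IsNorm ν) (x : Fin n → ℝ) : ν (-x) = ν x := by
  simpa using h.smul (-1) x

lemma map_sum_le (h : IsNorm ν) {ι : Type*} (s : Finset ι) (f : ι → Fin n → ℝ) :
    ν (∑ i ∈ s, f i) ≤ ∑ i ∈ s, ν (f i) := by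
  induction s using Finset.cons_induction with
  | empty => simp [h.map_zero]
  | cons a s _ ih =>
    rw [Finset.sum_cons, Finset.sum_cons]
    exact (h.triangle _ _).trans (add_le_add le_rfl ih)

lemma exists_le_mul_norm (h : IsNorm ν) : ∃ D, 0 ≤ D ∧ ∀ x, ν x ≤ D * ‖x‖ := by
  classical
  refine ⟨∑ i, ν (Pi.single i 1), Finset.sum_nonneg fun i _ => h.nonneg _, fun x => ?_⟩
  calc ν x = ν (∑ i, x i • Pi.single i (1 : ℝ)) := by simp_rw [← Pi.single_smul', smul_eq_mul,
          mul_one, Finset.univ_sum_single]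
    _ ≤ ∑ i, |x i| * ν (Pi.single i 1) :=
        (h.map_sum_le _ _).trans_eq (Finset.sum_congr rfl fun i _ => h.smul _ _)
    _ ≤ ∑ i, ‖x‖ * ν (Pi.single i 1) :=
        Finset.sum_le_sum fun i _ => mul_le_mul_of_nonneg_right (norm_le_pi_norm x i) (h.nonneg _)
    _ = (∑ i, ν (Pi.single i 1)) * ‖x‖ := by rw [← Finset.mul_sum, mul_comm]

lemma continuous (h : IsNorm ν) : Continuous ν := by
  obtain ⟨D, -, hD⟩ := h.exists_le_mul_norm
  refine (LipschitzWith.of_le_add_mul' D fun x y => ?_).continuous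
  calc ν x = ν (y + (x - y)) := by rw [add_sub_cancel]
    _ ≤ ν y + D * dist x y := by
        rw [dist_eq_norm]; exact (h.triangle _ _).trans (add_le_add le_rfl (hD _))

lemma exists_mul_norm_le (h : IsNorm ν) : ∃ c, 0 < c ∧ ∀ x, c * ‖x‖ ≤ ν x := by
  obtain ⟨c, hc, hsphere⟩ : ∃ c, 0 < c ∧ ∀ x ∈ Metric.sphere (0 : Fin n → ℝ) 1, c ≤ ν x := by
    rcases (Metric.sphere (0 : Fin n → ℝ) 1).eq_empty_or_nonempty with hempty | hne
    · exact ⟨1, one_pos, by simp [hempty]⟩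
    obtain ⟨x₀, hx₀, hmin⟩ := (isCompact_sphere _ _).exists_isMinOn hne h.continuous.continuousOn
    have hx₀ : x₀ ≠ 0 := ne_zero_of_mem_unit_sphere ⟨x₀, hx₀⟩
    exact ⟨ν x₀, (h.nonneg _).lt_of_ne' (mt (h.eq_zero_iff _).1 hx₀), hmin⟩
  refine ⟨c, hc, fun x => ?_⟩
  rcases eq_or_ne x 0 with rfl | hx
  · simp [h.map_zero]
  have hx' : 0 < ‖x‖ := norm_pos_iff.2 hx
  have := hsphere (‖x‖⁻¹ • x) (by simp [norm_smul, hx'.ne'])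
  rwa [h.smul, abs_of_pos (inv_pos.2 hx'), ← div_eq_inv_mul, le_div_iff₀ hx'] at this

end IsNorm

section distWith

variable {n : ℕ} {ν : (Fin n → ℝ) → ℝ} {x : Fin n → ℝ} {S : Set (Fin n → ℝ)}

lemma distWith_nonneg (hν : IsNorm ν) : 0 ≤ distWith ν x S :=
  Real.sInf_nonneg fun _ ⟨_, _, hr⟩ => hr ▸ hν.nonneg _

lemma distWith_le (hν : IsNorm ν) {s : Fin n → ℝ} (hs : s ∈ S) : distWith ν x S ≤ ν (x - s) :=
  csInf_le ⟨0, fun _ ⟨_, _, hr⟩ => hr ▸ hν.nonneg _⟩ (Set.mem_image_of_mem _ hs)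

lemma le_distWith (hS : S.Nonempty) {a : ℝ} (h : ∀ s ∈ S, a ≤ ν (x - s)) : a ≤ distWith ν x S :=
  le_csInf (hS.image _) fun _ ⟨s, hs, hr⟩ => hr ▸ h s hs

lemma le_mul_distWith (hS : S.Nonempty) {a K : ℝ} (hK : 0 ≤ K)
    (h : ∀ s ∈ S, a ≤ K * ν (x - s)) : a ≤ K * distWith ν x S := by
  rcases hK.eq_or_lt with rfl | hK
  · obtain ⟨s, hs⟩ := hS
    simpa using h s hs
  rw [← div_le_iff₀' hK]
  exact le_distWith hS fun s hs => (div_le_iff₀' hK).2 (h s hs)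

lemma distWith_zero (hν : IsNorm ν) : distWith ν 0 S = sInf (ν '' S) := by
  simp_rw [distWith, zero_sub, hν.map_neg]

lemma distWith_pos (hν : IsNorm ν) (hS : IsClosed S) (hne : S.Nonempty) (hx : x ∉ S) :
    0 < distWith ν x S := by
  obtain ⟨c, hc, hcν⟩ := hν.exists_mul_norm_le
  have hd : 0 < Metric.infDist x S := (hS.notMem_iff_infDist_pos hne).1 hx
  refine (mul_pos hc hd).trans_le (le_distWith hne fun s hs => ?_)
  calc c * Metric.infDist x S ≤ c * ‖x - s‖ := by
        rw [← dist_eq_norm]; exact mul_le_mul_of_nonneg_left (Metric.infDist_le_dist_of_mem hs) hc.le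
    _ ≤ ν (x - s) := hcν _

end distWith

lemma IsPolyhedron.isClosed {E : Type*} [NormedAddCommGroup E] [NormedSpace ℝ E]
    [FiniteDimensional ℝ E] {S : Set E} (hS : IsPolyhedron S) : IsClosed S := by
  obtain ⟨k, f, c, rfl⟩ := hS
  simp only [Set.ofPred_forall]
  exact isClosed_iInter fun i => isClosed_le (f i).continuous_of_finiteDimensional continuous_const

namespace IsSublinearMapping

variable {p q : ℕ} {Φ : (Fin p → ℝ) → Set (Fin q → ℝ)}

lemma smul_mem (hΦ : IsSublinearMapping Φ) {t : ℝ} (ht : 0 ≤ t) {u : Fin p → ℝ}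
    {v : Fin q → ℝ} (h : v ∈ Φ u) : t • v ∈ Φ (t • u) :=
  hΦ.2.2 t ht (u, v) h

lemma add_mem (hΦ : IsSublinearMapping Φ) {u₁ u₂ : Fin p → ℝ} {v₁ v₂ : Fin q → ℝ}
    (h₁ : v₁ ∈ Φ u₁) (h₂ : v₂ ∈ Φ u₂) : v₁ + v₂ ∈ Φ (u₁ + u₂) := by
  have hmid := hΦ.2.1 (show (u₁, v₁) ∈ graphOf Φ from h₁) (show (u₂, v₂) ∈ graphOf Φ from h₂)
    (by norm_num : (0 : ℝ) ≤ 1 / 2) (by norm_num : (0 : ℝ) ≤ 1 / 2) (by norm_num)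
  have := hΦ.2.2 2 zero_le_two _ hmid
  rwa [smul_add, smul_smul, smul_smul, show (2 : ℝ) * (1 / 2) = 1 by norm_num, one_smul,
    one_smul] at this

lemma sum_mem (hΦ : IsSublinearMapping Φ) {ι : Type*} (s : Finset ι) {u : ι → Fin p → ℝ}
    {v : ι → Fin q → ℝ} (h : ∀ i ∈ s, v i ∈ Φ (u i)) : ∑ i ∈ s, v i ∈ Φ (∑ i ∈ s, u i) := by
  induction s using Finset.cons_induction with
  | empty => simpa using hΦ.1
  | cons a s _ ih =>
    rw [Finset.sum_cons, Finset.sum_cons]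
    exact hΦ.add_mem (h a (s.mem_cons_self a)) (ih fun i hi => h i (Finset.mem_cons_of_mem hi))

lemma exists_mem_norm_le_mul_norm (hΦ : IsSublinearMapping Φ) {W : Submodule ℝ (Fin p → ℝ)}
    (hW : domOf Φ = W) : ∃ M, 0 ≤ M ∧ ∀ u ∈ W, ∃ w ∈ Φ u, ‖w‖ ≤ M * ‖u‖ := by
  let b := Module.finBasis ℝ W
  have hdom : ∀ u ∈ W, (Φ u).Nonempty := fun u hu => by rwa [← SetLike.mem_coe, ← hW] at hu
  choose wp hwp using fun j => hdom _ (b j).2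
  choose wm hwm using fun j => hdom _ (W.neg_mem (b j).2)
  let E : W →L[ℝ] (Fin (Module.finrank ℝ W) → ℝ) := b.equivFun.toContinuousLinearEquiv
  let B := ∑ j, (‖wp j‖ + ‖wm j‖)
  have hB : 0 ≤ B := Finset.sum_nonneg fun j _ => by positivity
  refine ⟨‖E‖ * B, by positivity, fun u hu => ?_⟩
  set t := b.equivFun ⟨u, hu⟩
  have hu_eq : u = ∑ j, ((t j)⁺ • (b j : Fin p → ℝ) + (t j)⁻ • -(b j : Fin p → ℝ)) := by
    simp_rw [smul_neg, ← sub_eq_add_neg, ← sub_smul, posPart_sub_negPart]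
    have h := congrArg Subtype.val (b.sum_equivFun ⟨u, hu⟩)
    simp only [Submodule.coe_sum, Submodule.coe_smul] at h
    exact h.symm
  refine ⟨∑ j, ((t j)⁺ • wp j + (t j)⁻ • wm j), ?_, ?_⟩
  · rw [hu_eq]
    exact hΦ.sum_mem _ fun j _ =>
      hΦ.add_mem (hΦ.smul_mem (posPart_nonneg _) (hwp j)) (hΦ.smul_mem (negPart_nonneg _) (hwm j))
  have ht : ‖t‖ ≤ ‖E‖ * ‖u‖ := E.le_opNorm ⟨u, hu⟩
  calc ‖∑ j, ((t j)⁺ • wp j + (t j)⁻ • wm j)‖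
      ≤ ∑ j, ((t j)⁺ * ‖wp j‖ + (t j)⁻ * ‖wm j‖) := by
        refine (norm_sum_le _ _).trans (Finset.sum_le_sum fun j _ => (norm_add_le _ _).trans ?_)
        rw [norm_smul_of_nonneg (posPart_nonneg _), norm_smul_of_nonneg (negPart_nonneg _)]
    _ ≤ ∑ j, ‖t‖ * (‖wp j‖ + ‖wm j‖) := by
        refine Finset.sum_le_sum fun j _ => ?_
        have htj : (t j)⁺ + (t j)⁻ ≤ ‖t‖ := by
          rw [posPart_add_negPart, ← Real.norm_eq_abs]; exact norm_le_pi_norm t j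
        nlinarith [posPart_nonneg (t j), negPart_nonneg (t j), norm_nonneg (wp j),
          norm_nonneg (wm j)]
    _ = ‖t‖ * B := by rw [Finset.mul_sum]
    _ ≤ ‖E‖ * B * ‖u‖ := by nlinarith

end IsSublinearMapping

namespace IsLinearSubspace

variable {E : Type*} [AddCommGroup E] [Module ℝ E] {S : Set E}

lemma smul_mem (hS : IsLinearSubspace S) (a : ℝ) {x : E} (hx : x ∈ S) : a • x ∈ S := by
  obtain ⟨W, rfl⟩ := hS
  exact W.smul_mem a hx

lemma sub_mem (hS : IsLinearSubspace S) {x y : E} (hx : x ∈ S) (hy : y ∈ S) : x - y ∈ S := by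
  obtain ⟨W, rfl⟩ := hS
  exact W.sub_mem hx hy

end IsLinearSubspace

lemma IsPolyhedralMapping.isClosed_invOf {p q : ℕ} {Φ : (Fin p → ℝ) → Set (Fin q → ℝ)}
    (hΦ : IsPolyhedralMapping Φ) (v : Fin q → ℝ) : IsClosed (invOf Φ v) :=
  IsPolyhedron.isClosed hΦ |>.preimage (continuous_id.prodMk continuous_const)

def HasHoffmanBound {p q : ℕ} (νp : (Fin p → ℝ) → ℝ) (νq : (Fin q → ℝ) → ℝ)
    (Φ : (Fin p → ℝ) → Set (Fin q → ℝ)) (K : ℝ) : Prop :=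
  ∀ u ∈ domOf Φ, ∀ v ∈ imOf Φ, distWith νq v (Φ u) ≤ K * distWith νp u (invOf Φ v)

section HoffmanConstant

variable {p q : ℕ} {νp : (Fin p → ℝ) → ℝ} {νq : (Fin q → ℝ) → ℝ}
  {Φ : (Fin p → ℝ) → Set (Fin q → ℝ)}

lemma IsSublinearMapping.exists_mem_le_mul (hνp : IsNorm νp) (hνq : IsNorm νq)
    (hΦ : IsSublinearMapping Φ) (hdom : IsLinearSubspace (domOf Φ)) :
    ∃ M, 0 ≤ M ∧ ∀ u ∈ domOf Φ, ∃ w ∈ Φ u, νq w ≤ M * νp u := by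
  obtain ⟨W, hW⟩ := hdom
  obtain ⟨M, hM, hsel⟩ := hΦ.exists_mem_norm_le_mul_norm hW
  obtain ⟨D, hD, hDν⟩ := hνq.exists_le_mul_norm
  obtain ⟨c, hc, hcν⟩ := hνp.exists_mul_norm_le
  refine ⟨D * M / c, by positivity, fun u hu => ?_⟩
  obtain ⟨w, hw, hwu⟩ := hsel u (by rwa [hW] at hu)
  refine ⟨w, hw, ?_⟩
  calc νq w ≤ D * (M * ‖u‖) := (hDν w).trans (mul_le_mul_of_nonneg_left hwu hD)
    _ ≤ D * (M * (νp u / c)) := by gcongr; exact (le_div_iff₀' hc).2 (hcν u)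
    _ = D * M / c * νp u := by ring

lemma le_svmNorm (hνp : IsNorm νp) (hνq : IsNorm νq) (hΦ : IsSublinearMapping Φ)
    (hdom : IsLinearSubspace (domOf Φ)) {u : Fin p → ℝ} (hu : u ∈ domOf Φ) (hu1 : νp u ≤ 1) :
    distWith νq 0 (Φ u) ≤ svmNorm νp νq Φ := by
  obtain ⟨M, hM, hsel⟩ := hΦ.exists_mem_le_mul hνp hνq hdom
  rw [distWith_zero hνq]
  refine le_csSup ⟨M, ?_⟩ ⟨u, hu, hu1, rfl⟩
  rintro _ ⟨u', hu', hu'1, rfl⟩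
  obtain ⟨w, hw, hwu⟩ := hsel u' hu'
  calc sInf (νq '' Φ u') = distWith νq 0 (Φ u') := (distWith_zero hνq).symm
    _ ≤ νq (0 - w) := distWith_le hνq hw
    _ ≤ M * νp u' := by rwa [zero_sub, hνq.map_neg]
    _ ≤ M := mul_le_of_le_one_right hM hu'1

lemma svmNorm_nonneg (hνp : IsNorm νp) (hνq : IsNorm νq) (hΦ : IsSublinearMapping Φ)
    (hdom : IsLinearSubspace (domOf Φ)) : 0 ≤ svmNorm νp νq Φ :=
  (distWith_nonneg hνq).trans <|
    le_svmNorm hνp hνq hΦ hdom ⟨0, hΦ.1⟩ (by rw [hνp.map_zero]; exact zero_le_one)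

lemma IsSublinearMapping.distWith_zero_smul_le {ν : (Fin q → ℝ) → ℝ} (hν : IsNorm ν)
    (hΦ : IsSublinearMapping Φ) {t : ℝ} (ht : 0 < t) {u : Fin p → ℝ} (hu : (Φ u).Nonempty) :
    distWith ν 0 (Φ (t • u)) ≤ t * distWith ν 0 (Φ u) :=
  le_mul_distWith hu ht.le fun w hw =>
    calc distWith ν 0 (Φ (t • u)) ≤ ν (0 - t • w) := distWith_le hν (hΦ.smul_mem ht.le hw)
      _ = t * ν (0 - w) := by rw [zero_sub, zero_sub, ← smul_neg, hν.smul, abs_of_pos ht]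

lemma distWith_zero_le_svmNorm_mul (hνp : IsNorm νp) (hνq : IsNorm νq)
    (hΦ : IsSublinearMapping Φ) (hdom : IsLinearSubspace (domOf Φ)) {u : Fin p → ℝ}
    (hu : u ∈ domOf Φ) : distWith νq 0 (Φ u) ≤ svmNorm νp νq Φ * νp u := by
  rcases eq_or_ne u 0 with rfl | hu0
  · rw [hνp.map_zero, mul_zero]
    simpa [hνq.map_zero] using distWith_le (x := 0) hνq hΦ.1
  have hs : 0 < νp u := (hνp.nonneg u).lt_of_ne' (mt (hνp.eq_zero_iff u).1 hu0)
  have hu' : (νp u)⁻¹ • u ∈ domOf Φ := hdom.smul_mem _ hu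
  have hu'1 : νp ((νp u)⁻¹ • u) = 1 := by
    rw [hνp.smul, abs_of_pos (inv_pos.2 hs), inv_mul_cancel₀ hs.ne']
  calc distWith νq 0 (Φ u) = distWith νq 0 (Φ (νp u • (νp u)⁻¹ • u)) := by
        rw [smul_inv_smul₀ hs.ne']
    _ ≤ νp u * distWith νq 0 (Φ ((νp u)⁻¹ • u)) := hΦ.distWith_zero_smul_le hνq hs hu'
    _ ≤ νp u * svmNorm νp νq Φ :=
        mul_le_mul_of_nonneg_left (le_svmNorm hνp hνq hΦ hdom hu' hu'1.le) hs.le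
    _ = svmNorm νp νq Φ * νp u := mul_comm _ _

lemma IsSublinearMapping.distWith_le_distWith_zero_sub {ν : (Fin q → ℝ) → ℝ} (hν : IsNorm ν)
    (hΦ : IsSublinearMapping Φ) {u ub : Fin p → ℝ} {v : Fin q → ℝ} (hub : v ∈ Φ ub)
    (hne : (Φ (u - ub)).Nonempty) : distWith ν v (Φ u) ≤ distWith ν 0 (Φ (u - ub)) :=
  le_distWith hne fun w hw => by
    have hvw : v + w ∈ Φ u := by simpa using hΦ.add_mem hub hw
    calc distWith ν v (Φ u) ≤ ν (v - (v + w)) := distWith_le hν hvw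
      _ = ν (0 - w) := by rw [sub_add_cancel_left, zero_sub]

lemma hasHoffmanBound_svmNorm (hνp : IsNorm νp) (hνq : IsNorm νq) (hΦ : IsSublinearMapping Φ)
    (hdom : IsLinearSubspace (domOf Φ)) : HasHoffmanBound νp νq Φ (svmNorm νp νq Φ) := by
  intro u hu v hv
  obtain ⟨u₀, hu₀⟩ := Set.mem_iUnion.1 hv
  refine le_mul_distWith ⟨u₀, hu₀⟩ (svmNorm_nonneg hνp hνq hΦ hdom) fun ub hub => ?_
  have hsub : u - ub ∈ domOf Φ := hdom.sub_mem hu ⟨v, hub⟩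
  exact (hΦ.distWith_le_distWith_zero_sub hνq hub hsub).trans
    (distWith_zero_le_svmNorm_mul hνp hνq hΦ hdom hsub)

lemma hoffmanConst_nonneg (hνp : IsNorm νp) (hνq : IsNorm νq) : 0 ≤ hoffmanConst νp νq Φ :=
  Real.sSup_nonneg fun _ ⟨_, _, _, _, _, hr⟩ =>
    hr ▸ div_nonneg (distWith_nonneg hνq) (distWith_nonneg hνp)

namespace HasHoffmanBound

variable {K : ℝ}

lemma mem_upperBounds (hK : HasHoffmanBound νp νq Φ K) (hνp : IsNorm νp) (hK0 : 0 ≤ K) :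
    K ∈ upperBounds {r | ∃ u v, u ∈ domOf Φ ∧ v ∈ imOf Φ ∧ v ∉ Φ u ∧
      r = distWith νq v (Φ u) / distWith νp u (invOf Φ v)} := by
  rintro _ ⟨u, v, hu, hv, -, rfl⟩
  exact div_le_of_le_mul₀ (distWith_nonneg hνp) hK0 (hK u hu v hv)

lemma hoffmanConst_le (hK : HasHoffmanBound νp νq Φ K) (hνp : IsNorm νp) (hK0 : 0 ≤ K) :
    hoffmanConst νp νq Φ ≤ K :=
  Real.sSup_le (hK.mem_upperBounds hνp hK0) hK0

lemma sInf_image_le_hoffmanConst (hK : HasHoffmanBound νp νq Φ K) (hK0 : 0 ≤ K)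
    (hνp : IsNorm νp) (hνq : IsNorm νq) (hΦ : IsPolyhedralMapping Φ)
    (h0 : (0 : Fin q → ℝ) ∈ Φ 0) {u : Fin p → ℝ} (hu : u ∈ domOf Φ) (hu1 : νp u ≤ 1) :
    sInf (νq '' Φ u) ≤ hoffmanConst νp νq Φ := by
  rw [← distWith_zero hνq]
  by_cases h0u : (0 : Fin q → ℝ) ∈ Φ u
  · calc distWith νq 0 (Φ u) ≤ νq (0 - 0) := distWith_le hνq h0u
      _ = 0 := by rw [sub_zero, hνq.map_zero]
      _ ≤ hoffmanConst νp νq Φ := hoffmanConst_nonneg hνp hνq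
  have hpos : 0 < distWith νp u (invOf Φ 0) :=
    distWith_pos hνp (hΦ.isClosed_invOf 0) ⟨0, h0⟩ h0u
  have hle1 : distWith νp u (invOf Φ 0) ≤ 1 :=
    (distWith_le hνp (show (0 : Fin p → ℝ) ∈ invOf Φ 0 from h0)).trans (by rwa [sub_zero])
  calc distWith νq 0 (Φ u) ≤ distWith νq 0 (Φ u) / distWith νp u (invOf Φ 0) :=
        le_div_self (distWith_nonneg hνq) hpos hle1
    _ ≤ hoffmanConst νp νq Φ :=
        le_csSup ⟨K, hK.mem_upperBounds hνp hK0⟩ ⟨u, 0, hu, Set.mem_iUnion.2 ⟨0, h0⟩, h0u, rfl⟩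

end HasHoffmanBound

end HoffmanConstant

/-- If `Φ` is polyhedral sublinear and `dom(Φ)` is a linear subspace,
then `H(Φ) = ‖Φ‖`. -/
theorem stmt1 {p q : ℕ} (νp : (Fin p → ℝ) → ℝ) (νq : (Fin q → ℝ) → ℝ)
    (hνp : IsNorm νp) (hνq : IsNorm νq)
    (Φ : (Fin p → ℝ) → Set (Fin q → ℝ)) (hpoly : IsPolyhedralMapping Φ)
    (hsub : IsSublinearMapping Φ) (hdom : IsLinearSubspace (domOf Φ)) :
    hoffmanConst νp νq Φ = svmNorm νp νq Φ := by
  have hN := svmNorm_nonneg hνp hνq hsub hdom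
  have hH := hasHoffmanBound_svmNorm hνp hνq hsub hdom
  refine le_antisymm (hH.hoffmanConst_le hνp hN) (Real.sSup_le ?_ (hoffmanConst_nonneg hνp hνq))
  rintro _ ⟨u, hu, hu1, rfl⟩
  exact hH.sInf_image_le_hoffmanConst hN hνp hνq hpoly hsub.1 hu hu1
end

section
/- Let R ⊆ ℝ^n and S ⊆ ℝ^m be polyhedral cones and A ∈ ℝ^{m×n}. Then the solution mappings P_{A,R,S} and P_{Aᵀ,S*,−R*} are sublinear (their graphs are convex cones containing the origin), and the upper adjoint of P_{A,R,S} is P_{Aᵀ,S*,−R*}: for all w ∈ ℝ^n and z ∈ ℝ^m, z ∈ (P_{A,R,S})*(w) if and only if z ∈ S* and w − Aᵀz ∈ R*. -/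
open Matrix Set

/-!
Both graphs are linear preimages of products of convex cones: `(b, x) ↦ (x, Ax - b)` pulls back
`R × S`, and `(c, y) ↦ (y, c - Aᵀy)` pulls back `S* × R*`. For the adjoint, testing `z` against
the graph points `(-s, 0)` with `s ∈ S` and `(Ax, x)` with `x ∈ R` gives `z ∈ S*` and
`w - Aᵀz ∈ R*`; conversely, on the graph `⟪w, x⟫ - ⟪z, b⟫ = ⟪w - Aᵀz, x⟫ + ⟪z, Ax - b⟫ ≥ 0`.
-/

lemma IsPolyhedron.convex {E : Type*} [AddCommGroup E] [Module ℝ E] {P : Set E}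
    (h : IsPolyhedron P) : Convex ℝ P := by
  obtain ⟨k, f, c, rfl⟩ := h
  simpa only [ofPred_forall] using convex_iInter fun i => convex_halfSpace_le (f i).isLinear (c i)

def IsPolyhedralCone.toPointedCone {n : ℕ} {C : Set (Fin n → ℝ)} (h : IsPolyhedralCone C) :
    PointedCone ℝ (Fin n → ℝ) where
  carrier := C
  zero_mem' := h.2.1
  smul_mem' t _ hx := h.2.2 t t.2 _ hx
  add_mem' {x y} hx hy := by
    -- `x + y = 2 • (2⁻¹ • x + 2⁻¹ • y)`
    have hmid := h.1.convex hx hy (by norm_num : (0 : ℝ) ≤ 2⁻¹) (by norm_num : (0 : ℝ) ≤ 2⁻¹)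
      (by norm_num)
    simpa [← smul_add, smul_smul] using h.2.2 2 zero_le_two _ hmid

lemma dualConeOf_eq_dual {n : ℕ} (C : Set (Fin n → ℝ)) :
    dualConeOf C = PointedCone.dual (dotProductBilin ℝ ℝ) C := by
  ext z
  simp [dualConeOf, dotProduct_comm]

lemma IsSublinearMapping.of_graphOf_eq_preimage {p q : ℕ} {Φ : (Fin p → ℝ) → Set (Fin q → ℝ)}
    {E : Type*} [AddCommGroup E] [Module ℝ E] (L : (Fin p → ℝ) × (Fin q → ℝ) →ₗ[ℝ] E)
    (K : PointedCone ℝ E) (h : graphOf Φ = L ⁻¹' K) : IsSublinearMapping Φ := by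
  have hK : graphOf Φ = (K.comap (L.restrictScalars _) : Set _) := h
  refine ⟨?_, hK ▸ PointedCone.convex _, fun t ht z hz => ?_⟩
  · exact (Set.ext_iff.mp hK (0, 0)).mpr (zero_mem _)
  · rw [hK] at hz ⊢
    exact Submodule.smul_mem _ (⟨t, ht⟩ : NNReal) hz

lemma graphOf_solMap {m n : ℕ} (A : Matrix (Fin m) (Fin n) ℝ) (R : Set (Fin n → ℝ))
    (S : Set (Fin m → ℝ)) :
    graphOf (solMap A R S) =
      (LinearMap.snd ℝ _ _).prod (A.mulVecLin ∘ₗ LinearMap.snd ℝ _ _ - LinearMap.fst ℝ _ _) ⁻¹'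
        R ×ˢ S :=
  rfl

lemma graphOf_dualSolMap {m n : ℕ} (A : Matrix (Fin m) (Fin n) ℝ) (R : Set (Fin n → ℝ))
    (S : Set (Fin m → ℝ)) :
    graphOf (dualSolMap A R S) =
      (LinearMap.snd ℝ _ _).prod (LinearMap.fst ℝ _ _ - Aᵀ.mulVecLin ∘ₗ LinearMap.snd ℝ _ _) ⁻¹'
        dualConeOf S ×ˢ dualConeOf R :=
  rfl

lemma isSublinearMapping_solMap {m n : ℕ} (A : Matrix (Fin m) (Fin n) ℝ)
    (R : PointedCone ℝ (Fin n → ℝ)) (S : PointedCone ℝ (Fin m → ℝ)) :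
    IsSublinearMapping (solMap A R S) :=
  .of_graphOf_eq_preimage _ (R.prod S) (graphOf_solMap A R S)

lemma isSublinearMapping_dualSolMap {m n : ℕ} (A : Matrix (Fin m) (Fin n) ℝ)
    (R : Set (Fin n → ℝ)) (S : Set (Fin m → ℝ)) :
    IsSublinearMapping (dualSolMap A R S) := by
  have h := graphOf_dualSolMap A R S
  rw [dualConeOf_eq_dual, dualConeOf_eq_dual, ← Submodule.prod_coe] at h
  exact .of_graphOf_eq_preimage _
    ((PointedCone.dual (dotProductBilin ℝ ℝ) S).prod (PointedCone.dual (dotProductBilin ℝ ℝ) R)) h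

lemma mem_upperAdjoint_solMap_iff {m n : ℕ} {A : Matrix (Fin m) (Fin n) ℝ} {R : Set (Fin n → ℝ)}
    {S : Set (Fin m → ℝ)} (hR : 0 ∈ R) (hS : 0 ∈ S) {w : Fin n → ℝ} {z : Fin m → ℝ} :
    z ∈ upperAdjoint (solMap A R S) w ↔ z ∈ dualConeOf S ∧ w - Aᵀ *ᵥ z ∈ dualConeOf R := by
  have pairing (x : Fin n → ℝ) : (w - Aᵀ *ᵥ z) ⬝ᵥ x = w ⬝ᵥ x - z ⬝ᵥ (A *ᵥ x) := by
    rw [sub_dotProduct, mulVec_transpose, ← dotProduct_mulVec]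
  constructor
  · intro h
    refine ⟨fun s hs => ?_, fun x hx => ?_⟩
    · simpa using h (-s) 0 ⟨hR, by simpa using hs⟩
    · have := h (A *ᵥ x) x ⟨hx, by simpa using hS⟩
      rw [pairing]
      linarith
  · rintro ⟨hzS, hzR⟩ b x ⟨hxR, hxS⟩
    have h₁ := pairing x ▸ hzR x hxR
    have h₂ : 0 ≤ z ⬝ᵥ (A *ᵥ x - b) := hzS _ hxS
    rw [dotProduct_sub] at h₂
    linarith

/-- `P_{A,R,S}` and `P_{Aᵀ,S*,−R*}` are sublinear and
`(P_{A,R,S})* = P_{Aᵀ,S*,−R*}`. -/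
theorem stmt12 {m n : ℕ} (A : Matrix (Fin m) (Fin n) ℝ)
    (R : Set (Fin n → ℝ)) (S : Set (Fin m → ℝ))
    (hR : IsPolyhedralCone R) (hS : IsPolyhedralCone S) :
    IsSublinearMapping (solMap A R S) ∧ IsSublinearMapping (dualSolMap A R S) ∧
    ∀ (w : Fin n → ℝ) (z : Fin m → ℝ),
      z ∈ upperAdjoint (solMap A R S) w ↔
        z ∈ dualConeOf S ∧ w - Aᵀ *ᵥ z ∈ dualConeOf R :=
  ⟨isSublinearMapping_solMap A hR.toPointedCone hS.toPointedCone,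
    isSublinearMapping_dualSolMap A R S, fun _ _ => mem_upperAdjoint_solMap_iff hR.2.1 hS.2.1⟩
end
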